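/- Let Ω be a bounded hyperconvex domain in ℂⁿ and μ a positive Borel measure on Ω with μ(Ω) > 0. Let u ∈ E¹(Ω) \ {0} with I_μ(u) < +∞. If (dd^c u)ⁿ ≤ (−λ₁(μ) u)ⁿ μ, then (dd^c u)ⁿ = (−λ₁(μ) u)ⁿ μ, i.e. any supersolution at the level λ₁(μ) is a solution of the eigenvalue problem. -/

import Mathlib

open MeasureTheory Filter Set
open scoped ENNReal Topology

noncomputable section

/-- `ℂⁿ`, identified with `Fin n → ℂ`. -/
abbrev Cn (n : ℕ) := Fin n → ℂ

/-- A real-valued function is plurisubharmonic on `Ω` if it is upper semicontinuous on `Ω`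
and satisfies the sub-mean value inequality on every closed complex disc contained in `Ω`. -/
def IsPsh {n : ℕ} (Ω : Set (Cn n)) (u : Cn n → ℝ) : Prop :=
  UpperSemicontinuousOn u Ω ∧
    ∀ a ∈ Ω, ∀ b : Cn n, ∀ r : ℝ, 0 < r →
      (∀ w : ℂ, ‖w‖ ≤ r → a + w • b ∈ Ω) →
      u a ≤ ⨍ θ in (0 : ℝ)..(2 * Real.pi),
        u (a + (((r : ℂ) * Complex.exp ((θ : ℂ) * Complex.I)) • b))

/-- A bounded hyperconvex domain: a bounded domain admitting a negative continuous
plurisubharmonic exhaustion function. -/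
def IsBoundedHyperconvex {n : ℕ} (Ω : Set (Cn n)) : Prop :=
  IsOpen Ω ∧ Ω.Nonempty ∧ Bornology.IsBounded Ω ∧
    ∃ ρ : Cn n → ℝ, ContinuousOn ρ Ω ∧ IsPsh Ω ρ ∧ (∀ z ∈ Ω, ρ z < 0) ∧
      ∀ c : ℝ, c < 0 → closure {z ∈ Ω | ρ z ≤ c} ⊆ Ω

/-- A setting for pluripotential theory on a bounded hyperconvex domain `Ω ⊂ ℂⁿ`:
the data of the domain together with the complex Monge-Ampère operator
`u ↦ (dd^c u)^n`, which assigns to (pluri)potentials a positive Borel measure,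
supported on `Ω`. -/
structure MASetting (n : ℕ) where
  /-- the domain -/
  Ω : Set (Cn n)
  hyperconvex : IsBoundedHyperconvex Ω
  /-- the complex Monge-Ampère operator `u ↦ (dd^c u)^n` -/
  MA : (Cn n → ℝ) → Measure (Cn n)
  MA_outside : ∀ u, MA u (Ωᶜ) = 0

namespace MASetting

variable {n : ℕ} (S : MASetting n)

/-- The Cegrell class `E⁰(Ω)`: bounded plurisubharmonic functions with boundary values `0`
and finite total Monge-Ampère mass. -/
def memE0 (u : Cn n → ℝ) : Prop :=
  IsPsh S.Ω u ∧ (∀ z ∈ S.Ω, u z ≤ 0) ∧ BddBelow (u '' S.Ω) ∧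
    (∀ ξ ∈ frontier S.Ω, Tendsto u (nhdsWithin ξ S.Ω) (nhds 0)) ∧
    S.MA u univ < ⊤

/-- The Cegrell class `E¹(Ω)`: plurisubharmonic functions admitting a decreasing sequence
in `E⁰(Ω)` converging to them pointwise with uniformly bounded Monge-Ampère energies. -/
def memE1 (u : Cn n → ℝ) : Prop :=
  IsPsh S.Ω u ∧
    ∃ (v : ℕ → Cn n → ℝ) (C : ℝ),
      (∀ j, S.memE0 (v j)) ∧
      (∀ j, ∀ z ∈ S.Ω, v (j + 1) z ≤ v j z) ∧
      (∀ z ∈ S.Ω, Tendsto (fun j => v j z) atTop (nhds (u z))) ∧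
      (∀ j, ∫⁻ z, ENNReal.ofReal (-(v j z)) ∂(S.MA (v j)) ≤ ENNReal.ofReal C)

/-- `u` is not identically `0` on `Ω` (i.e. `u ∈ E¹(Ω) \ {0}` when `u ∈ E¹(Ω)`). -/
def nonzero (u : Cn n → ℝ) : Prop := ∃ z ∈ S.Ω, u z ≠ 0

/-- The Monge-Ampère energy `E(u) = ∫_Ω (-u) (dd^c u)^n`. -/
def energy (u : Cn n → ℝ) : ℝ≥0∞ :=
  ∫⁻ z, ENNReal.ofReal (-(u z)) ∂(S.MA u)

/-- `I_μ(u) = ∫_Ω (-u)^(n+1) dμ`. -/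
def Ifun (μ : Measure (Cn n)) (u : Cn n → ℝ) : ℝ≥0∞ :=
  ∫⁻ z in S.Ω, ENNReal.ofReal ((-(u z)) ^ (n + 1)) ∂μ

/-- The Rayleigh-type quotient `R(u) = E(u) / I_μ(u)`. -/
def Rq (μ : Measure (Cn n)) (u : Cn n → ℝ) : ℝ≥0∞ := S.energy u / S.Ifun μ u

/-- `λ₁(μ)ⁿ := inf { E(u)/I_μ(u) : u ∈ E¹(Ω) \ {0}, I_μ(u) < ∞ }`. -/
def lambda1Pow (μ : Measure (Cn n)) : ℝ≥0∞ :=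
  sInf {r : ℝ≥0∞ | ∃ u : Cn n → ℝ, S.memE1 u ∧ S.nonzero u ∧ S.Ifun μ u ≠ ⊤ ∧ r = S.Rq μ u}

/-- The eigenvalue `λ₁(μ) = (λ₁(μ)ⁿ)^(1/n)`. -/
def lambda1 (μ : Measure (Cn n)) : ℝ≥0∞ := S.lambda1Pow μ ^ ((n : ℝ)⁻¹)

/-- The eigenvalue equation `(dd^c u)^n = (-λ u)^n μ`. -/
def eigenEq (μ : Measure (Cn n)) (lam : ℝ) (u : Cn n → ℝ) : Prop :=
  S.MA u = μ.withDensity fun z => ENNReal.ofReal ((lam * (-(u z))) ^ n)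

/-- `u` is a subsolution: `(dd^c u)^n ≥ (-λ u)^n μ`. -/
def subsolution (μ : Measure (Cn n)) (lam : ℝ) (u : Cn n → ℝ) : Prop :=
  (μ.withDensity fun z => ENNReal.ofReal ((lam * (-(u z))) ^ n)) ≤ S.MA u

/-- `u` is a supersolution: `(dd^c u)^n ≤ (-λ u)^n μ`. -/
def supersolution (μ : Measure (Cn n)) (lam : ℝ) (u : Cn n → ℝ) : Prop :=
  S.MA u ≤ μ.withDensity fun z => ENNReal.ofReal ((lam * (-(u z))) ^ n)

end MASetting

/-! Put `ν = (dd^c u)ⁿ` and `σ = λ₁(μ)ⁿ (-u)ⁿ μ`, so that `ν ≤ σ`. Integrating `-u` against both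
gives `E(u) ≤ λ₁(μ)ⁿ I_μ(u)`, and the variational definition of `λ₁(μ)` gives the reverse
inequality. The common value is finite: some member `v_j` of a sequence defining `u ∈ E¹(Ω)` has
`0 < I_μ(v_j) < ∞` and bounded energy, so `λ₁(μ) < ∞`. Hence the measures `(-u) ν ≤ (-u) σ` are
finite with equal mass, so they coincide, and since `-u > 0` `σ`-a.e. we may divide by `-u`. -/

theorem UpperSemicontinuousOn.aemeasurable_restrict {α : Type*} [TopologicalSpace α]
    [MeasurableSpace α] [OpensMeasurableSpace α] {s : Set α} (hs : MeasurableSet s)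
    {u : α → ℝ} (hu : UpperSemicontinuousOn u s) {μ : Measure α} :
    AEMeasurable u (μ.restrict s) :=
  aemeasurable_restrict_of_measurable_subtype hs
    (upperSemicontinuousOn_iff_restrict.2 hu).measurable

namespace MeasureTheory.Measure

variable {α : Type*} [MeasurableSpace α] {ν σ : Measure α}

theorem withDensity_mono_measure (hle : ν ≤ σ) (f : α → ℝ≥0∞) :
    ν.withDensity f ≤ σ.withDensity f :=
  le_iff.2 fun s hs => by
    rw [withDensity_apply _ hs, withDensity_apply _ hs]
    exact lintegral_mono' (restrict_mono subset_rfl hle) le_rfl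

theorem eq_of_le_of_lintegral_le {f : α → ℝ≥0∞} (hle : ν ≤ σ) (hf : AEMeasurable f σ)
    (hint : ∫⁻ x, f x ∂σ ≤ ∫⁻ x, f x ∂ν) (hfin : ∫⁻ x, f x ∂σ ≠ ⊤)
    (hpos : ∀ᵐ x ∂σ, f x ≠ 0) (htop : ∀ᵐ x ∂σ, f x ≠ ⊤) : ν = σ := by
  have hνσ : ∫⁻ x, f x ∂ν ≤ ∫⁻ x, f x ∂σ := lintegral_mono' hle le_rfl
  have : IsFiniteMeasure (ν.withDensity f) :=
    isFiniteMeasure_withDensity (ne_top_of_le_ne_top hfin hνσ)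
  have heq : ν.withDensity f = σ.withDensity f := by
    refine eq_of_le_of_measure_univ_eq (withDensity_mono_measure hle f) ?_
    simp only [withDensity_apply _ MeasurableSet.univ, restrict_univ]
    exact le_antisymm hνσ hint
  calc ν = (ν.withDensity f).withDensity fun x => (f x)⁻¹ :=
        (withDensity_inv_same₀ (hf.mono_measure hle) (ae_mono hle hpos) (ae_mono hle htop)).symm
    _ = σ := by rw [heq, withDensity_inv_same₀ hf hpos htop]

end MeasureTheory.Measure

namespace MASetting

variable {n : ℕ} (S : MASetting n) {μ : Measure (Cn n)} {u v : Cn n → ℝ}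

theorem measurableSet_Ω : MeasurableSet S.Ω := S.hyperconvex.1.measurableSet

theorem aemeasurable_of_isPsh (hu : IsPsh S.Ω u) (hμ : μ S.Ωᶜ = 0) : AEMeasurable u μ :=
  Measure.restrict_eq_self_of_ae_mem (ae_iff.2 hμ) ▸ hu.1.aemeasurable_restrict S.measurableSet_Ω

variable {S}

theorem memE1.nonpos (hu : S.memE1 u) : ∀ z ∈ S.Ω, u z ≤ 0 := by
  obtain ⟨-, v, -, hv0, -, hvtend, -⟩ := hu
  exact fun z hz => le_of_tendsto' (hvtend z hz) fun j => (hv0 j).2.1 z hz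

theorem memE1_of_memE0 (hv : S.memE0 v) {C : ℝ} (hC : S.energy v ≤ ENNReal.ofReal C) :
    S.memE1 v :=
  ⟨hv.1, fun _ => v, C, fun _ => hv, fun _ _ _ => le_rfl, fun _ _ => tendsto_const_nhds,
    fun _ => hC⟩

theorem nonzero_of_Ifun_ne_zero (h : S.Ifun μ u ≠ 0) : S.nonzero u := by
  by_contra hu
  have hu_zero : ∀ z ∈ S.Ω, u z = 0 := by simpa [nonzero] using hu
  refine h (setLIntegral_eq_zero S.measurableSet_Ω fun z hz => ?_)
  simp [hu_zero z hz]

theorem Ifun_anti (hv : ∀ z ∈ S.Ω, v z ≤ 0) (huv : ∀ z ∈ S.Ω, u z ≤ v z) :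
    S.Ifun μ v ≤ S.Ifun μ u :=
  setLIntegral_mono' S.measurableSet_Ω fun z hz => ENNReal.ofReal_le_ofReal <|
    pow_le_pow_left₀ (neg_nonneg.2 (hv z hz)) (neg_le_neg (huv z hz)) _

theorem Ifun_eq_zero_of_tendsto {v : ℕ → Cn n → ℝ} (hv : ∀ j, IsPsh S.Ω (v j))
    (hvI : ∀ j, S.Ifun μ (v j) = 0)
    (hlim : ∀ z ∈ S.Ω, Tendsto (fun j => v j z) atTop (𝓝 (u z))) : S.Ifun μ u = 0 := by
  have hzero : ∀ᵐ z ∂μ.restrict S.Ω, ∀ j, ENNReal.ofReal ((-(v j z)) ^ (n + 1)) = 0 :=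
    ae_all_iff.2 fun j => (lintegral_eq_zero_iff' (((hv j).1.aemeasurable_restrict
      S.measurableSet_Ω).neg.pow_const _).ennreal_ofReal).1 (hvI j)
  refine (lintegral_congr_ae ?_).trans lintegral_zero
  filter_upwards [hzero, ae_restrict_mem S.measurableSet_Ω] with z hz hzΩ
  refine tendsto_nhds_unique (ENNReal.tendsto_ofReal ((hlim z hzΩ).neg.pow _)) ?_
  simp only [hz, tendsto_const_nhds]

theorem lambda1Pow_le_Rq (hu : S.memE1 u) (hu0 : S.nonzero u) (huI : S.Ifun μ u ≠ ⊤) :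
    S.lambda1Pow μ ≤ S.Rq μ u :=
  sInf_le ⟨u, hu, hu0, huI, rfl⟩

theorem lambda1Pow_lt_top (hu : S.memE1 u) (hI0 : S.Ifun μ u ≠ 0) (hI : S.Ifun μ u ≠ ⊤) :
    S.lambda1Pow μ < ⊤ := by
  obtain ⟨-, v, C, hv0, hvdec, hvtend, hvE⟩ := hu
  obtain ⟨j, hj⟩ : ∃ j, S.Ifun μ (v j) ≠ 0 := by
    by_contra! h
    exact hI0 (Ifun_eq_zero_of_tendsto (fun j => (hv0 j).1) h hvtend)
  have hle : ∀ z ∈ S.Ω, u z ≤ v j z := fun z hz =>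
    (antitone_nat_of_succ_le fun i => hvdec i z hz).le_of_tendsto (hvtend z hz) j
  have hIj : S.Ifun μ (v j) ≠ ⊤ := ne_top_of_le_ne_top hI (Ifun_anti (hv0 j).2.1 hle)
  calc S.lambda1Pow μ ≤ S.Rq μ (v j) :=
        lambda1Pow_le_Rq (memE1_of_memE0 (hv0 j) (hvE j)) (nonzero_of_Ifun_ne_zero hj) hIj
    _ ≤ ENNReal.ofReal C / S.Ifun μ (v j) := ENNReal.div_le_div_right (hvE j) _
    _ < ⊤ := ENNReal.div_lt_top ENNReal.ofReal_ne_top hj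

theorem lambda1Pow_mul_Ifun_le_energy (hu : S.memE1 u) (hu0 : S.nonzero u)
    (huI : S.Ifun μ u ≠ ⊤) : S.lambda1Pow μ * S.Ifun μ u ≤ S.energy u := by
  rcases eq_or_ne (S.Ifun μ u) 0 with h | h
  · simp [h]
  · exact (ENNReal.le_div_iff_mul_le (Or.inl h) (Or.inl huI)).1 (lambda1Pow_le_Rq hu hu0 huI)

theorem lambda1Pow_mul_Ifun_ne_top (hu : S.memE1 u) (huI : S.Ifun μ u ≠ ⊤) :
    S.lambda1Pow μ * S.Ifun μ u ≠ ⊤ := by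
  rcases eq_or_ne (S.Ifun μ u) 0 with h | h
  · simp [h]
  · exact ENNReal.mul_ne_top (lambda1Pow_lt_top hu h huI).ne huI

theorem lintegral_withDensity_negPow_eq_mul_Ifun (hμ : μ S.Ωᶜ = 0) (hu : IsPsh S.Ω u)
    (hu_nonpos : ∀ z ∈ S.Ω, u z ≤ 0) (c : ℝ≥0∞) :
    ∫⁻ z, ENNReal.ofReal (-(u z)) ∂μ.withDensity (fun z => c * ENNReal.ofReal ((-(u z)) ^ n)) =
      c * S.Ifun μ u := by
  have hΩ : ∀ᵐ z ∂μ, z ∈ S.Ω := ae_iff.2 hμ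
  have hum : AEMeasurable u μ := S.aemeasurable_of_isPsh hu hμ
  have hpow : ∀ k, AEMeasurable (fun z => ENNReal.ofReal ((-(u z)) ^ k)) μ := fun k =>
    (hum.neg.pow_const k).ennreal_ofReal
  have hneg : AEMeasurable (fun z => ENNReal.ofReal (-(u z))) μ := hum.neg.ennreal_ofReal
  rw [lintegral_withDensity_eq_lintegral_mul₀ ((hpow n).const_mul c) hneg, Ifun,
    Measure.restrict_eq_self_of_ae_mem hΩ, ← lintegral_const_mul'' c (hpow (n + 1))]
  refine lintegral_congr_ae ?_
  filter_upwards [hΩ] with z hz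
  rw [Pi.mul_apply, mul_assoc, ← ENNReal.ofReal_mul (pow_nonneg (neg_nonneg.2 (hu_nonpos z hz)) n),
    pow_succ]

end MASetting

theorem statement5_general {n : ℕ} (S : MASetting n) (μ : Measure (Cn n))
    (hμout : μ (S.Ωᶜ) = 0)
    (u : Cn n → ℝ) (hu : S.memE1 u) (hu0 : S.nonzero u) (huI : S.Ifun μ u ≠ ⊤)
    (hsuper : S.MA u ≤
      μ.withDensity fun z => S.lambda1Pow μ * ENNReal.ofReal ((-(u z)) ^ n)) :
    S.MA u = μ.withDensity fun z => S.lambda1Pow μ * ENNReal.ofReal ((-(u z)) ^ n) := by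
  have hum : AEMeasurable u μ := S.aemeasurable_of_isPsh hu.1 hμout
  have hσ := S.lintegral_withDensity_negPow_eq_mul_Ifun hμout hu.1 hu.nonpos (S.lambda1Pow μ)
  -- for `n = 0` the density is constant and `Cn 0` is a point, where `u < 0`
  have hneg : ∀ z ∈ S.Ω, (-(u z)) ^ n ≠ 0 → u z < 0 := by
    obtain ⟨z₀, -, hz₀⟩ := hu0
    intro z hz hpow
    refine (hu.nonpos z hz).lt_of_ne fun h => ?_
    rcases n.eq_zero_or_pos with rfl | hn
    · exact hz₀ (Subsingleton.elim z₀ z ▸ h)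
    · exact hpow (by simp [h, hn.ne'])
  have hdens : AEMeasurable (fun z => S.lambda1Pow μ * ENNReal.ofReal ((-(u z)) ^ n)) μ :=
    (hum.neg.pow_const n).ennreal_ofReal.const_mul _
  have hf : AEMeasurable (fun z => ENNReal.ofReal (-(u z))) μ := hum.neg.ennreal_ofReal
  refine Measure.eq_of_le_of_lintegral_le hsuper (hf.mono_ac (withDensity_absolutelyContinuous _ _))
    (hσ.trans_le (S.lambda1Pow_mul_Ifun_le_energy hu hu0 huI))
    (hσ.trans_ne (S.lambda1Pow_mul_Ifun_ne_top hu huI)) ?_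
    (ae_of_all _ fun _ => ENNReal.ofReal_ne_top)
  rw [ae_withDensity_iff' hdens]
  filter_upwards [ae_iff.2 hμout] with z hz hdens_ne
  have hpow : (-(u z)) ^ n ≠ 0 := fun h => hdens_ne (by simp [h])
  exact (ENNReal.ofReal_pos.2 (neg_pos.2 (hneg z hz hpow))).ne'

/-- any supersolution at the level `λ₁(μ)`, i.e. `u ∈ E¹(Ω) \ {0}` with
`I_μ(u) < ∞` and `(dd^c u)^n ≤ (-λ₁(μ) u)^n μ`, is a solution of the eigenvalue problem. -/
theorem statement5 {n : ℕ} (S : MASetting n) (μ : Measure (Cn n))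
    (hμout : μ (S.Ωᶜ) = 0) (hμpos : 0 < μ S.Ω)
    (u : Cn n → ℝ) (hu : S.memE1 u) (hu0 : S.nonzero u) (huI : S.Ifun μ u ≠ ⊤)
    (hsuper : S.MA u ≤
      μ.withDensity fun z => S.lambda1Pow μ * ENNReal.ofReal ((-(u z)) ^ n)) :
    S.MA u = μ.withDensity fun z => S.lambda1Pow μ * ENNReal.ofReal ((-(u z)) ^ n) :=
  statement5_general S μ hμout u hu hu0 huI hsuper
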